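/- arXiv:2009.14316 — 2 statements merged into one kernel-verified Lean document; each statement's English description precedes it below -/
import Mathlib

section
/- Series connection formula: if edges e' from a to c and e'' from c to b have resistances μ', μ'' > 0, and the intermediate potential x_c is chosen so that the currents coincide, (x_a − x_c)^r/μ'^s = (x_c − x_b)^r/μ''^s with x_a ≥ x_c ≥ x_b, then x_c = (x_b·μ'^{s/r} + x_a·μ''^{s/r})/(μ'^{s/r} + μ''^{s/r}), and the common current equals (x_a − x_b)^r/μ_{a,b}^s where μ_{a,b}^{s/r} = μ'^{s/r} + μ''^{s/r}. -/
/-- Series connection: if edges `a → c` and `c → b` have resistances `μ', μ'' > 0`, the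
potentials satisfy `x_a ≥ x_c ≥ x_b`, and the currents coincide
(`(x_a − x_c)^r/μ'^s = (x_c − x_b)^r/μ''^s`), then
`x_c = (x_b·μ'^(s/r) + x_a·μ''^(s/r))/(μ'^(s/r) + μ''^(s/r))` and the common current equals
`(x_a − x_b)^r/μab^s` where `μab^(s/r) = μ'^(s/r) + μ''^(s/r)`. -/
theorem series_connection (r s μ' μ'' xa xb xc : ℝ) (hr : 0 < r) (hs : 0 < s)
    (h' : 0 < μ') (h'' : 0 < μ'') (hac : xa ≥ xc) (hcb : xc ≥ xb)
    (hKirchhoff : (xa - xc) ^ r / μ' ^ s = (xc - xb) ^ r / μ'' ^ s)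
    (μab : ℝ) (hμab : μab = (μ' ^ (s / r) + μ'' ^ (s / r)) ^ (r / s)) :
    xc = (xb * μ' ^ (s / r) + xa * μ'' ^ (s / r)) / (μ' ^ (s / r) + μ'' ^ (s / r)) ∧
      (xa - xc) ^ r / μ' ^ s = (xa - xb) ^ r / μab ^ s := by
  set p := s / r with hp
  have hac0 : (0:ℝ) ≤ xa - xc := by linarith
  have hcb0 : (0:ℝ) ≤ xc - xb := by linarith
  have hμ'p : (0:ℝ) < μ' ^ p := Real.rpow_pos_of_pos h' p
  have hμ''p : (0:ℝ) < μ'' ^ p := Real.rpow_pos_of_pos h'' p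
  have hμ's : (0:ℝ) < μ' ^ s := Real.rpow_pos_of_pos h' s
  have hμ''s : (0:ℝ) < μ'' ^ s := Real.rpow_pos_of_pos h'' s
  have hA : (0:ℝ) < μ' ^ p + μ'' ^ p := by linarith
  have hpr : p * r = s := div_mul_cancel₀ s hr.ne'
  -- raise to the r-th power
  have key : (xa - xc) * μ'' ^ p = (xc - xb) * μ' ^ p := by
    have h1 : ((xa - xc) * μ'' ^ p) ^ r = ((xc - xb) * μ' ^ p) ^ r := by
      rw [Real.mul_rpow hac0 hμ''p.le, Real.mul_rpow hcb0 hμ'p.le,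
        ← Real.rpow_mul h''.le, ← Real.rpow_mul h'.le, hpr]
      field_simp at hKirchhoff ⊢
      linarith [hKirchhoff]
    exact Real.rpow_left_injOn hr.ne'
      (by positivity : (0:ℝ) ≤ (xa - xc) * μ'' ^ p)
      (by positivity : (0:ℝ) ≤ (xc - xb) * μ' ^ p) h1
  have hxc : xc = (xb * μ' ^ p + xa * μ'' ^ p) / (μ' ^ p + μ'' ^ p) := by
    field_simp
    nlinarith [key]
  refine ⟨hxc, ?_⟩
  have hdiff : xa - xc = (xa - xb) * μ' ^ p / (μ' ^ p + μ'' ^ p) := by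
    rw [hxc]; field_simp; ring
  have hab0 : (0:ℝ) ≤ xa - xb := by linarith
  have hμabs : μab ^ s = (μ' ^ p + μ'' ^ p) ^ r := by
    rw [hμab, ← Real.rpow_mul hA.le, div_mul_cancel₀ r hs.ne']
  have hlhs : (xa - xc) ^ r = (xa - xb) ^ r * μ' ^ s / (μ' ^ p + μ'' ^ p) ^ r := by
    rw [hdiff, Real.div_rpow (by positivity) hA.le, Real.mul_rpow hab0 hμ'p.le,
      ← Real.rpow_mul h'.le, hpr]
  rw [hlhs, hμabs]
  have hAr : (0:ℝ) < (μ' ^ p + μ'' ^ p) ^ r := Real.rpow_pos_of_pos hA r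
  field_simp
end

section
/- Strictness transfer: under the hypotheses of the previous derivation (x_a > x_c > x_b, positive parameters), if at least one of the two current inequalities is strict, then the conclusion is strict: μ_{a,b}^{s/r} < μ_{a,c}^{s/r} + μ_{c,b}^{s/r}. Conversely, if both hold with equality, then μ_{a,b}^{s/r} = μ_{a,c}^{s/r} + μ_{c,b}^{s/r}. -/
lemma key_le (r s u v m n : ℝ) (hr : 0 < r) (hs : 0 < s) (hu : 0 < u) (hv : 0 < v)
    (hm : 0 < m) (hn : 0 < n) :
    u ^ r / m ^ s ≤ v ^ r / n ^ s ↔ n ^ (s / r) * u ≤ m ^ (s / r) * v := by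
  rw [div_le_div_iff₀ (by positivity) (by positivity)]
  have e1 : u ^ r * n ^ s = (n ^ (s / r) * u) ^ r := by
    rw [Real.mul_rpow (by positivity) hu.le, ← Real.rpow_mul hn.le,
      div_mul_cancel₀ _ hr.ne', mul_comm]
  have e2 : v ^ r * m ^ s = (m ^ (s / r) * v) ^ r := by
    rw [Real.mul_rpow (by positivity) hv.le, ← Real.rpow_mul hm.le,
      div_mul_cancel₀ _ hr.ne', mul_comm]
  rw [e1, e2, Real.rpow_le_rpow_iff (by positivity) (by positivity) hr]

lemma key_lt (r s u v m n : ℝ) (hr : 0 < r) (hs : 0 < s) (hu : 0 < u) (hv : 0 < v)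
    (hm : 0 < m) (hn : 0 < n) :
    u ^ r / m ^ s < v ^ r / n ^ s ↔ n ^ (s / r) * u < m ^ (s / r) * v := by
  rw [lt_iff_le_not_ge, lt_iff_le_not_ge, key_le r s u v m n hr hs hu hv hm hn,
    key_le r s v u n m hr hs hv hu hn hm]

lemma key_eq (r s u v m n : ℝ) (hr : 0 < r) (hs : 0 < s) (hu : 0 < u) (hv : 0 < v)
    (hm : 0 < m) (hn : 0 < n) :
    u ^ r / m ^ s = v ^ r / n ^ s ↔ n ^ (s / r) * u = m ^ (s / r) * v := by
  rw [le_antisymm_iff, le_antisymm_iff, key_le r s u v m n hr hs hu hv hm hn,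
    key_le r s v u n m hr hs hv hu hn hm]

/-- Strictness transfer: with `x_a > x_c > x_b` and the two current inequalities, if at
least one of them is strict then `μab^(s/r) < μac^(s/r) + μcb^(s/r)`; and if both hold
with equality then `μab^(s/r) = μac^(s/r) + μcb^(s/r)`. -/
theorem main_inequality_strictness (r s xa xb xc μab μac μcb : ℝ)
    (hr : 0 < r) (hs : 0 < s) (h1 : xa > xc) (h2 : xc > xb)
    (hab : 0 < μab) (hac : 0 < μac) (hcb : 0 < μcb)
    (H1 : (xa - xc) ^ r / μac ^ s ≤ (xa - xb) ^ r / μab ^ s)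
    (H2 : (xc - xb) ^ r / μcb ^ s ≤ (xa - xb) ^ r / μab ^ s) :
    ((xa - xc) ^ r / μac ^ s < (xa - xb) ^ r / μab ^ s ∨
        (xc - xb) ^ r / μcb ^ s < (xa - xb) ^ r / μab ^ s →
      μab ^ (s / r) < μac ^ (s / r) + μcb ^ (s / r)) ∧
    ((xa - xc) ^ r / μac ^ s = (xa - xb) ^ r / μab ^ s ∧
        (xc - xb) ^ r / μcb ^ s = (xa - xb) ^ r / μab ^ s →
      μab ^ (s / r) = μac ^ (s / r) + μcb ^ (s / r)) := by
  have hA : (0:ℝ) < xa - xc := by linarith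
  have hB : (0:ℝ) < xc - xb := by linarith
  have hC : (0:ℝ) < xa - xb := by linarith
  have K1 := key_le r s (xa - xc) (xa - xb) μac μab hr hs hA hC hac hab
  have K2 := key_le r s (xc - xb) (xa - xb) μcb μab hr hs hB hC hcb hab
  have L1 := key_lt r s (xa - xc) (xa - xb) μac μab hr hs hA hC hac hab
  have L2 := key_lt r s (xc - xb) (xa - xb) μcb μab hr hs hB hC hcb hab
  have E1 := key_eq r s (xa - xc) (xa - xb) μac μab hr hs hA hC hac hab
  have E2 := key_eq r s (xc - xb) (xa - xb) μcb μab hr hs hB hC hcb hab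
  rw [K1] at H1
  rw [K2] at H2
  have hsum : xa - xb = (xa - xc) + (xc - xb) := by ring
  constructor
  · rintro (h | h)
    · rw [L1] at h
      have : μab ^ (s / r) * (xa - xb) < (μac ^ (s / r) + μcb ^ (s / r)) * (xa - xb) := by
        rw [hsum]; nlinarith
      exact lt_of_mul_lt_mul_right (by linarith [this]) hC.le |>.trans_le le_rfl
    · rw [L2] at h
      have : μab ^ (s / r) * (xa - xb) < (μac ^ (s / r) + μcb ^ (s / r)) * (xa - xb) := by
        rw [hsum]; nlinarith
      exact lt_of_mul_lt_mul_right (by linarith [this]) hC.le |>.trans_le le_rfl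
  · rintro ⟨h1', h2'⟩
    rw [E1] at h1'
    rw [E2] at h2'
    have : μab ^ (s / r) * (xa - xb) = (μac ^ (s / r) + μcb ^ (s / r)) * (xa - xb) := by
      rw [hsum]; ring_nf; ring_nf at h1' h2'; linarith
    exact mul_right_cancel₀ hC.ne' this
end
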